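/- Let B be a symmetric positive definite n×n real matrix, let v, r ∈ ℝⁿ, and let δ > 0 be such that the corrected gradient variation r̃ := r − δv satisfies vᵀr̃ > 0. Let B₊ := B + (r̃ r̃ᵀ)/(vᵀ r̃) − (B v vᵀ B)/(vᵀ B v) + δI be the regularized BFGS update. Then B₊ solves the regularized semidefinite program: for every symmetric n×n matrix Z satisfying the secant constraint Z v = r and such that Z − δI is positive definite, one has tr(B⁻¹(Z − δI)) − log det(B⁻¹(Z − δI)) ≥ tr(B⁻¹(B₊ − δI)) − log det(B⁻¹(B₊ − δI)). -/

import Mathlib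

/-!
Put `W = B₊ - δI` and `X = Z - δI`. Then `W` is the classical BFGS update of `B` for the
pair `(v, r̃)`: it is positive definite because `vᵀr̃ > 0`, and `W v = r̃ = X v`. The
difference `B⁻¹ - W⁻¹ = W⁻¹(W - B)B⁻¹` is a sum of rank-one matrices each having `v` as a
left or right factor, while the symmetric matrix `X - W` annihilates `v`; hence
`tr(B⁻¹(X - W)) = tr(W⁻¹(X - W))`. So the objective at `X` exceeds the objective at `W` by
`tr(W⁻¹X) - n - log det(W⁻¹X)`, which is nonnegative by `log λ ≤ λ - 1` applied to the
eigenvalues of a positive definite matrix similar to `W⁻¹X`.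
-/

namespace Matrix

variable {ι : Type*} [Fintype ι]

theorem PosDef.card_le_trace_sub_log_det [DecidableEq ι] {M : Matrix ι ι ℝ} (hM : M.PosDef) :
    (Fintype.card ι : ℝ) ≤ M.trace - Real.log M.det := by
  have hpos := hM.eigenvalues_pos
  rw [hM.1.trace_eq_sum_eigenvalues, hM.1.det_eq_prod_eigenvalues]
  simp only [RCLike.ofReal_real_eq_id, id_eq]
  rw [Real.log_prod fun i _ => (hpos i).ne', ← Finset.sum_sub_distrib]
  calc (Fintype.card ι : ℝ) = ∑ _i : ι, (1 : ℝ) := by simp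
    _ ≤ _ := Finset.sum_le_sum fun i _ => by
      linarith [Real.log_le_sub_one_of_pos (hpos i)]

open scoped MatrixOrder in
theorem PosDef.card_le_trace_mul_sub_log_det_mul [DecidableEq ι] {P Q : Matrix ι ι ℝ}
    (hP : P.PosDef) (hQ : Q.PosDef) :
    (Fintype.card ι : ℝ) ≤ (P * Q).trace - Real.log (P * Q).det := by
  -- `P * (star R * R)` is similar to the positive definite `R * P * star R`.
  obtain ⟨R, rfl⟩ := CStarAlgebra.nonneg_iff_eq_star_mul_self.mp hQ.posSemidef.nonneg
  have hR : IsUnit R := by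
    have hdet := (isUnit_iff_isUnit_det _).mp hQ.isUnit
    rw [det_mul] at hdet
    exact (isUnit_iff_isUnit_det R).mpr (isUnit_of_mul_isUnit_right hdet)
  have htrace : (P * (star R * R)).trace = (R * P * star R).trace := by
    rw [← Matrix.mul_assoc, trace_mul_cycle, Matrix.mul_assoc]
  have hdet : (P * (star R * R)).det = (R * P * star R).det := by
    simp only [det_mul]; ring
  rw [htrace, hdet]
  exact ((IsUnit.posDef_star_right_conjugate_iff hR).mpr hP).card_le_trace_sub_log_det

theorem trace_inv_mul_sub_log_det_le_of_trace_eq [DecidableEq ι] {B W X : Matrix ι ι ℝ}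
    (hB : IsUnit B.det) (hW : W.PosDef) (hX : X.PosDef)
    (h : (B⁻¹ * (X - W)).trace = (W⁻¹ * (X - W)).trace) :
    (B⁻¹ * W).trace - Real.log (B⁻¹ * W).det ≤ (B⁻¹ * X).trace - Real.log (B⁻¹ * X).det := by
  have hWdet : IsUnit W.det := hW.det_pos.ne'.isUnit
  have htrace : (B⁻¹ * X).trace - (B⁻¹ * W).trace = (W⁻¹ * X).trace - Fintype.card ι := by
    rw [← trace_sub, ← Matrix.mul_sub, h, Matrix.mul_sub, trace_sub, nonsing_inv_mul _ hWdet,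
      trace_one]
  have hdet : (B⁻¹ * X).det = (B⁻¹ * W).det * (W⁻¹ * X).det := by
    rw [← det_mul, Matrix.mul_assoc, ← Matrix.mul_assoc W, mul_nonsing_inv _ hWdet,
      Matrix.one_mul]
  have hBW : (B⁻¹ * W).det ≠ 0 := by
    rw [det_mul]; exact mul_ne_zero (isUnit_nonsing_inv_det B hB).ne_zero hW.det_pos.ne'
  have hWX : (W⁻¹ * X).det ≠ 0 := by
    rw [det_mul]; exact mul_ne_zero hW.inv.det_pos.ne' hX.det_pos.ne'
  rw [hdet, Real.log_mul hBW hWX]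
  linarith [hW.inv.card_le_trace_mul_sub_log_det_mul hX]

theorem IsSymm.dotProduct_mulVec_comm {B : Matrix ι ι ℝ} (hB : B.IsSymm) (x y : ι → ℝ) :
    x ⬝ᵥ B *ᵥ y = y ⬝ᵥ B *ᵥ x := by
  rw [dotProduct_mulVec, ← mulVec_transpose, hB.eq, dotProduct_comm]

theorem PosDef.dotProduct_mulVec_self_pos {B : Matrix ι ι ℝ} (hB : B.PosDef) {v : ι → ℝ}
    (hv : v ≠ 0) : 0 < v ⬝ᵥ B *ᵥ v := by
  simpa using hB.dotProduct_mulVec_pos hv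

theorem PosDef.sq_dotProduct_mulVec_lt {B : Matrix ι ι ℝ} (hB : B.PosDef) {v x : ι → ℝ}
    (hv : v ≠ 0) (hx : ∀ c : ℝ, x ≠ c • v) :
    (v ⬝ᵥ B *ᵥ x) ^ 2 < (x ⬝ᵥ B *ᵥ x) * (v ⬝ᵥ B *ᵥ v) := by
  have hm := hB.dotProduct_mulVec_self_pos hv
  set c := (v ⬝ᵥ B *ᵥ x) / (v ⬝ᵥ B *ᵥ v)
  have hpos : 0 < (x - c • v) ⬝ᵥ B *ᵥ (x - c • v) := by
    simpa using hB.dotProduct_mulVec_pos (sub_ne_zero.mpr (hx c))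
  have hsymm := (isHermitian_iff_isSymm.mp hB.1).dotProduct_mulVec_comm x v
  simp only [mulVec_sub, mulVec_smul, dotProduct_sub, sub_dotProduct, dotProduct_smul,
    smul_dotProduct, smul_eq_mul, hsymm] at hpos
  have hcm : c * (v ⬝ᵥ B *ᵥ v) = v ⬝ᵥ B *ᵥ x := div_mul_cancel₀ _ hm.ne'
  nlinarith [mul_pos hpos hm]

noncomputable def bfgsUpdate (B : Matrix ι ι ℝ) (v y : ι → ℝ) : Matrix ι ι ℝ :=
  B + (v ⬝ᵥ y)⁻¹ • vecMulVec y y - (v ⬝ᵥ B *ᵥ v)⁻¹ • vecMulVec (B *ᵥ v) (B *ᵥ v)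

theorem bfgsUpdate_mulVec {B : Matrix ι ι ℝ} {v y : ι → ℝ} (hy : v ⬝ᵥ y ≠ 0)
    (hv : v ⬝ᵥ B *ᵥ v ≠ 0) : bfgsUpdate B v y *ᵥ v = y := by
  rw [bfgsUpdate, sub_mulVec, add_mulVec, smul_mulVec, smul_mulVec, vecMulVec_mulVec,
    vecMulVec_mulVec, op_smul_eq_smul, op_smul_eq_smul, smul_smul, smul_smul, dotProduct_comm y,
    dotProduct_comm (B *ᵥ v), inv_mul_cancel₀ hy, inv_mul_cancel₀ hv, one_smul, one_smul,
    add_sub_cancel_left]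

theorem isSymm_bfgsUpdate {B : Matrix ι ι ℝ} (hB : B.IsSymm) (v y : ι → ℝ) :
    (bfgsUpdate B v y).IsSymm :=
  (hB.add (IsSymm.smul (transpose_vecMulVec y y) _)).sub
    (IsSymm.smul (transpose_vecMulVec _ _) _)

theorem posDef_bfgsUpdate {B : Matrix ι ι ℝ} (hB : B.PosDef) {v y : ι → ℝ}
    (hy : 0 < v ⬝ᵥ y) : (bfgsUpdate B v y).PosDef := by
  have hv : v ≠ 0 := by rintro rfl; simp at hy
  have hm := hB.dotProduct_mulVec_self_pos hv
  have hBs : B.IsSymm := isHermitian_iff_isSymm.mp hB.1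
  refine .of_dotProduct_mulVec_pos (isHermitian_iff_isSymm.mpr (isSymm_bfgsUpdate hBs v y))
    fun x hx => ?_
  rw [star_trivial]
  by_cases hxv : ∃ c : ℝ, x = c • v
  · obtain ⟨c, rfl⟩ := hxv
    have hc : c ≠ 0 := by rintro rfl; simp at hx
    rw [mulVec_smul, bfgsUpdate_mulVec hy.ne' hm.ne', smul_dotProduct, dotProduct_smul,
      smul_eq_mul, smul_eq_mul, ← mul_assoc]
    exact mul_pos (mul_self_pos.mpr hc) hy
  · simp only [not_exists] at hxv
    have hquad : x ⬝ᵥ bfgsUpdate B v y *ᵥ x = x ⬝ᵥ B *ᵥ x + (y ⬝ᵥ x) ^ 2 / (v ⬝ᵥ y)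
        - (v ⬝ᵥ B *ᵥ x) ^ 2 / (v ⬝ᵥ B *ᵥ v) := by
      simp only [bfgsUpdate, sub_mulVec, add_mulVec, smul_mulVec, vecMulVec_mulVec,
        op_smul_eq_smul, dotProduct_sub, dotProduct_add, dotProduct_smul, smul_eq_mul]
      rw [dotProduct_comm x y, dotProduct_comm (B *ᵥ v), hBs.dotProduct_mulVec_comm x v]
      ring
    have hcs : (v ⬝ᵥ B *ᵥ x) ^ 2 / (v ⬝ᵥ B *ᵥ v) < x ⬝ᵥ B *ᵥ x :=
      (div_lt_iff₀ hm).mpr (hB.sq_dotProduct_mulVec_lt hv hxv)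
    have hy2 : 0 ≤ (y ⬝ᵥ x) ^ 2 / (v ⬝ᵥ y) := div_nonneg (sq_nonneg _) hy.le
    linarith

theorem inv_sub_inv_bfgsUpdate [DecidableEq ι] {B : Matrix ι ι ℝ} (hB : B.PosDef)
    {v y : ι → ℝ} (hy : 0 < v ⬝ᵥ y) :
    B⁻¹ - (bfgsUpdate B v y)⁻¹ = (v ⬝ᵥ y)⁻¹ • vecMulVec v (y ᵥ* B⁻¹)
      - (v ⬝ᵥ B *ᵥ v)⁻¹ • vecMulVec ((bfgsUpdate B v y)⁻¹ *ᵥ B *ᵥ v) v := by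
  set W := bfgsUpdate B v y
  have hm := hB.dotProduct_mulVec_self_pos (show v ≠ 0 by rintro rfl; simp at hy)
  have hBdet : IsUnit B.det := hB.det_pos.ne'.isUnit
  have hWdet : IsUnit W.det := (posDef_bfgsUpdate hB hy).det_pos.ne'.isUnit
  have hWB : W - B = (v ⬝ᵥ y)⁻¹ • vecMulVec y y
      - (v ⬝ᵥ B *ᵥ v)⁻¹ • vecMulVec (B *ᵥ v) (B *ᵥ v) := by
    simp only [W, bfgsUpdate]; abel
  have hWy : W⁻¹ *ᵥ y = v := by
    rw [← bfgsUpdate_mulVec hy.ne' hm.ne', mulVec_mulVec, nonsing_inv_mul _ hWdet, one_mulVec]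
  have hBvB : (B *ᵥ v) ᵥ* B⁻¹ = v := by
    rw [← vecMul_transpose, (isHermitian_iff_isSymm.mp hB.1).eq, vecMul_vecMul,
      mul_nonsing_inv _ hBdet, vecMul_one]
  calc B⁻¹ - W⁻¹ = W⁻¹ * (W - B) * B⁻¹ := by
        rw [Matrix.mul_sub, nonsing_inv_mul _ hWdet, Matrix.sub_mul, Matrix.one_mul,
          Matrix.mul_assoc, mul_nonsing_inv _ hBdet, Matrix.mul_one]
    _ = _ := by
        rw [hWB, Matrix.mul_sub, Matrix.sub_mul, Matrix.mul_smul, Matrix.mul_smul,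
          Matrix.smul_mul, Matrix.smul_mul, mul_vecMulVec, mul_vecMulVec, vecMulVec_mul,
          vecMulVec_mul, hWy, hBvB]

theorem trace_inv_mul_sub_bfgsUpdate [DecidableEq ι] {B X : Matrix ι ι ℝ} (hB : B.PosDef)
    {v y : ι → ℝ} (hy : 0 < v ⬝ᵥ y) (hX : X.IsSymm) (hXv : X *ᵥ v = y) :
    (B⁻¹ * (X - bfgsUpdate B v y)).trace
      = ((bfgsUpdate B v y)⁻¹ * (X - bfgsUpdate B v y)).trace := by
  have hm := hB.dotProduct_mulVec_self_pos (show v ≠ 0 by rintro rfl; simp at hy)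
  have hSv : (X - bfgsUpdate B v y) *ᵥ v = 0 := by
    rw [sub_mulVec, hXv, bfgsUpdate_mulVec hy.ne' hm.ne', sub_self]
  have hvS : v ᵥ* (X - bfgsUpdate B v y) = 0 := by
    rw [← mulVec_transpose,
      (hX.sub (isSymm_bfgsUpdate (isHermitian_iff_isSymm.mp hB.1) v y)).eq, hSv]
  rw [← sub_eq_zero, ← trace_sub, ← Matrix.sub_mul, inv_sub_inv_bfgsUpdate hB hy,
    Matrix.sub_mul, Matrix.smul_mul, Matrix.smul_mul, trace_sub, trace_smul, trace_smul,
    trace_mul_comm (vecMulVec v _), mul_vecMulVec, hSv, vecMulVec_mul, hvS, zero_vecMulVec,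
    vecMulVec_zero, trace_zero, smul_zero, smul_zero, sub_zero]

end Matrix

open Matrix

theorem regularized_bfgs_update_optimal_general {n : ℕ}
    (B : Matrix (Fin n) (Fin n) ℝ) (hB : B.PosDef)
    (v r : Fin n → ℝ) (δ : ℝ)
    (hcurv : 0 < v ⬝ᵥ (r - δ • v))
    (Bp : Matrix (Fin n) (Fin n) ℝ)
    (hBp : Bp = B + (v ⬝ᵥ (r - δ • v))⁻¹ • vecMulVec (r - δ • v) (r - δ • v)
        - (v ⬝ᵥ B *ᵥ v)⁻¹ • vecMulVec (B *ᵥ v) (B *ᵥ v)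
        + δ • (1 : Matrix (Fin n) (Fin n) ℝ)) :
    ∀ Z : Matrix (Fin n) (Fin n) ℝ, Z.IsSymm → Z *ᵥ v = r →
      (Z - δ • (1 : Matrix (Fin n) (Fin n) ℝ)).PosDef →
      (B⁻¹ * (Bp - δ • (1 : Matrix (Fin n) (Fin n) ℝ))).trace
          - Real.log (B⁻¹ * (Bp - δ • (1 : Matrix (Fin n) (Fin n) ℝ))).det
        ≤ (B⁻¹ * (Z - δ • (1 : Matrix (Fin n) (Fin n) ℝ))).trace
          - Real.log (B⁻¹ * (Z - δ • (1 : Matrix (Fin n) (Fin n) ℝ))).det := by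
  intro Z hZ hZv hX
  have hBp' : Bp - δ • 1 = bfgsUpdate B v (r - δ • v) := by
    rw [hBp, bfgsUpdate]; abel
  have hXv : (Z - δ • 1) *ᵥ v = r - δ • v := by
    rw [sub_mulVec, hZv, smul_mulVec, one_mulVec]
  rw [hBp']
  exact trace_inv_mul_sub_log_det_le_of_trace_eq hB.det_pos.ne'.isUnit
    (posDef_bfgsUpdate hB hcurv) hX
    (trace_inv_mul_sub_bfgsUpdate hB hcurv (hZ.sub (isSymm_one.smul δ)) hXv)

/-- **Lemma 1: the regularized BFGS update solves the regularized semidefinite program.**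
For a symmetric positive definite matrix `B`, vectors `v, r`, and `δ > 0` with
`vᵀ(r - δv) > 0`, the regularized BFGS update
`B₊ = B + (r̃r̃ᵀ)/(vᵀr̃) - (BvvᵀB)/(vᵀBv) + δI` (where `r̃ = r - δv`)
minimizes `tr(B⁻¹(Z - δI)) - log det(B⁻¹(Z - δI))` among all symmetric matrices `Z`
satisfying the secant condition `Zv = r` and with `Z - δI` positive definite. -/
theorem regularized_bfgs_update_optimal {n : ℕ}
    (B : Matrix (Fin n) (Fin n) ℝ) (hB : B.PosDef)
    (v r : Fin n → ℝ) (δ : ℝ) (hδ : 0 < δ)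
    (hcurv : 0 < v ⬝ᵥ (r - δ • v))
    (Bp : Matrix (Fin n) (Fin n) ℝ)
    (hBp : Bp = B + (v ⬝ᵥ (r - δ • v))⁻¹ • vecMulVec (r - δ • v) (r - δ • v)
        - (v ⬝ᵥ B *ᵥ v)⁻¹ • vecMulVec (B *ᵥ v) (B *ᵥ v)
        + δ • (1 : Matrix (Fin n) (Fin n) ℝ)) :
    ∀ Z : Matrix (Fin n) (Fin n) ℝ, Z.IsSymm → Z *ᵥ v = r →
      (Z - δ • (1 : Matrix (Fin n) (Fin n) ℝ)).PosDef →
      (B⁻¹ * (Bp - δ • (1 : Matrix (Fin n) (Fin n) ℝ))).trace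
          - Real.log (B⁻¹ * (Bp - δ • (1 : Matrix (Fin n) (Fin n) ℝ))).det
        ≤ (B⁻¹ * (Z - δ • (1 : Matrix (Fin n) (Fin n) ℝ))).trace
          - Real.log (B⁻¹ * (Z - δ • (1 : Matrix (Fin n) (Fin n) ℝ))).det :=
  regularized_bfgs_update_optimal_general B hB v r δ hcurv Bp hBp
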